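/- Correctness of the solid Schur-complement solve with equal mass matrices (Algorithm 3): let M, K : Mat_{n×n}(ℝ), ρ, Δt, θ ∈ ℝ, and suppose M and A := ρ M + Δt² θ² K are invertible. Given (r_v, r_u) ∈ ℝⁿ × ℝⁿ, define x_v := A⁻¹ (r_v − Δt θ K M⁻¹ r_u) and x_u := M⁻¹ (r_u + Δt θ M x_v). Then (x_v, x_u) solves the block system ρ M x_v + Δt θ K x_u = r_v and −Δt θ M x_v + M x_u = r_u; moreover (x_v, x_u) is the unique solution of this system. -/
import Mathlib


open Matrix

/-- Correctness and uniqueness of the solid Schur-complement solve with equal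
mass matrices (Algorithm 3). -/
theorem solid_schur_solve (n : ℕ) (M K : Matrix (Fin n) (Fin n) ℝ)
    (ρ Δt θ : ℝ) (hM : IsUnit M) (hA : IsUnit (ρ • M + (Δt ^ 2 * θ ^ 2) • K))
    (r_v r_u : Fin n → ℝ) :
    let x_v : Fin n → ℝ :=
      (ρ • M + (Δt ^ 2 * θ ^ 2) • K)⁻¹ *ᵥ (r_v - ((Δt * θ) • (K * M⁻¹)) *ᵥ r_u)
    let x_u : Fin n → ℝ := M⁻¹ *ᵥ (r_u + (Δt * θ) • (M *ᵥ x_v))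
    ((ρ • M) *ᵥ x_v + ((Δt * θ) • K) *ᵥ x_u = r_v ∧
        (-(Δt * θ) • M) *ᵥ x_v + M *ᵥ x_u = r_u) ∧
      ∀ y_v y_u : Fin n → ℝ,
        (ρ • M) *ᵥ y_v + ((Δt * θ) • K) *ᵥ y_u = r_v →
        (-(Δt * θ) • M) *ᵥ y_v + M *ᵥ y_u = r_u →
        y_v = x_v ∧ y_u = x_u := by
  intro x_v x_u
  have hMd : IsUnit M.det := (Matrix.isUnit_iff_isUnit_det M).mp hM
  have hAd : IsUnit (ρ • M + (Δt ^ 2 * θ ^ 2) • K).det :=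
    (Matrix.isUnit_iff_isUnit_det _).mp hA
  set A : Matrix (Fin n) (Fin n) ℝ := ρ • M + (Δt ^ 2 * θ ^ 2) • K with hAdef
  have cancelM : ∀ v : Fin n → ℝ, M *ᵥ (M⁻¹ *ᵥ v) = v := by
    intro v
    rw [Matrix.mulVec_mulVec, Matrix.mul_nonsing_inv _ hMd, Matrix.one_mulVec]
  have cancelMinv : ∀ v : Fin n → ℝ, M⁻¹ *ᵥ (M *ᵥ v) = v := by
    intro v
    rw [Matrix.mulVec_mulVec, Matrix.nonsing_inv_mul _ hMd, Matrix.one_mulVec]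
  have cancelA : ∀ v : Fin n → ℝ, A *ᵥ (A⁻¹ *ᵥ v) = v := by
    intro v
    rw [Matrix.mulVec_mulVec, Matrix.mul_nonsing_inv _ hAd, Matrix.one_mulVec]
  have cancelAinv : ∀ v : Fin n → ℝ, A⁻¹ *ᵥ (A *ᵥ v) = v := by
    intro v
    rw [Matrix.mulVec_mulVec, Matrix.nonsing_inv_mul _ hAd, Matrix.one_mulVec]
  have hxu : x_u = M⁻¹ *ᵥ r_u + (Δt * θ) • x_v := by
    show M⁻¹ *ᵥ (r_u + (Δt * θ) • (M *ᵥ x_v)) = _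
    rw [Matrix.mulVec_add, Matrix.mulVec_smul, cancelMinv]
  have hAx : A *ᵥ x_v = r_v - (Δt * θ) • (K *ᵥ (M⁻¹ *ᵥ r_u)) := by
    show A *ᵥ (A⁻¹ *ᵥ _) = _
    rw [cancelA, Matrix.smul_mulVec, ← Matrix.mulVec_mulVec]
  have hAexp : ∀ v : Fin n → ℝ,
      A *ᵥ v = ρ • (M *ᵥ v) + (Δt ^ 2 * θ ^ 2) • (K *ᵥ v) := by
    intro v
    rw [hAdef, Matrix.add_mulVec, Matrix.smul_mulVec, Matrix.smul_mulVec]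
  have hrv : r_v = ρ • (M *ᵥ x_v) + (Δt ^ 2 * θ ^ 2) • (K *ᵥ x_v)
      + (Δt * θ) • (K *ᵥ (M⁻¹ *ᵥ r_u)) := by
    have := hAx
    rw [hAexp] at this
    rw [this]; module
  refine ⟨⟨?_, ?_⟩, ?_⟩
  · rw [hxu, Matrix.smul_mulVec, Matrix.smul_mulVec,
      Matrix.mulVec_add, Matrix.mulVec_smul]
    rw [hrv]; module
  · rw [hxu, Matrix.smul_mulVec, Matrix.mulVec_add, Matrix.mulVec_smul, cancelM]
    module
  · intro y_v y_u hy1 hy2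
    have hyu : y_u = M⁻¹ *ᵥ r_u + (Δt * θ) • y_v := by
      have hMy : M *ᵥ y_u = r_u + (Δt * θ) • (M *ᵥ y_v) := by
        rw [← hy2, Matrix.smul_mulVec]; module
      calc y_u = M⁻¹ *ᵥ (M *ᵥ y_u) := (cancelMinv y_u).symm
        _ = _ := by rw [hMy, Matrix.mulVec_add, Matrix.mulVec_smul, cancelMinv]
    have hAy : A *ᵥ y_v = r_v - (Δt * θ) • (K *ᵥ (M⁻¹ *ᵥ r_u)) := by
      rw [hAexp]
      rw [← hy1, hyu, Matrix.smul_mulVec, Matrix.smul_mulVec,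
        Matrix.mulVec_add, Matrix.mulVec_smul]
      module
    have hyv : y_v = x_v := by
      calc y_v = A⁻¹ *ᵥ (A *ᵥ y_v) := (cancelAinv y_v).symm
        _ = A⁻¹ *ᵥ (A *ᵥ x_v) := by rw [hAy, hAx]
        _ = x_v := cancelAinv x_v
    exact ⟨hyv, by rw [hyu, hyv, hxu]⟩
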